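/- Let 0 < γ < 1 and let (η_t) be a nonincreasing nonnegative sequence. Define Λ(t) = Σ_{τ=0}^{t} γ^{t+1-τ} η_τ. Then for all τ, ς ≥ 0: Λ(τ+ς) ≤ γ^ς Λ(τ) + η_τ · γ/(1-γ). -/
import Mathlib


open Finset in
theorem stmt_6 (γ : ℝ) (hγ0 : 0 < γ) (hγ1 : γ < 1) (η : ℕ → ℝ) (hη : ∀ t, 0 ≤ η t)
    (hmono : ∀ t, η (t + 1) ≤ η t) (Λ : ℕ → ℝ)
    (hΛ : ∀ t, Λ t = ∑ τ ∈ Finset.range (t + 1), γ ^ (t + 1 - τ) * η τ) :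
    ∀ τ ς : ℕ, Λ (τ + ς) ≤ γ ^ ς * Λ τ + η τ * (γ / (1 - γ)) := by
  have hA : Antitone η := antitone_nat_of_succ_le hmono
  intro τ ς
  have h1γ : 0 < 1 - γ := by linarith
  rw [hΛ, hΛ]
  have hsplit : τ + ς + 1 = (τ + 1) + ς := by ring
  rw [hsplit, Finset.sum_range_add]
  have h1 : ∑ k ∈ Finset.range (τ + 1), γ ^ (τ + 1 + ς - k) * η k
      = γ ^ ς * ∑ k ∈ Finset.range (τ + 1), γ ^ (τ + 1 - k) * η k := by
    rw [Finset.mul_sum]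
    apply Finset.sum_congr rfl
    intro k hk
    have hk' : k ≤ τ := Nat.lt_succ_iff.mp (Finset.mem_range.mp hk)
    have : τ + 1 + ς - k = ς + (τ + 1 - k) := by omega
    rw [this, pow_add, mul_assoc]
  have h2 : ∑ j ∈ Finset.range ς, γ ^ (τ + 1 + ς - (τ + 1 + j)) * η (τ + 1 + j)
      ≤ η τ * (γ / (1 - γ)) := by
    have hb : ∀ j ∈ Finset.range ς,
        γ ^ (τ + 1 + ς - (τ + 1 + j)) * η (τ + 1 + j) ≤ γ ^ (ς - j) * η τ := by
      intro j hj
      have : τ + 1 + ς - (τ + 1 + j) = ς - j := by omega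
      rw [this]
      exact mul_le_mul_of_nonneg_left (hA (by omega)) (pow_nonneg hγ0.le _)
    calc ∑ j ∈ Finset.range ς, γ ^ (τ + 1 + ς - (τ + 1 + j)) * η (τ + 1 + j)
        ≤ ∑ j ∈ Finset.range ς, γ ^ (ς - j) * η τ := Finset.sum_le_sum hb
      _ = (∑ j ∈ Finset.range ς, γ ^ (ς - j)) * η τ := by rw [Finset.sum_mul]
      _ ≤ (γ / (1 - γ)) * η τ := by
          apply mul_le_mul_of_nonneg_right _ (hη τ)
          have hre : ∑ j ∈ Finset.range ς, γ ^ (ς - j)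
              = ∑ j ∈ Finset.range ς, γ ^ (j + 1) := by
            rw [← Finset.sum_range_reflect (fun j => γ ^ (j + 1)) ς]
            apply Finset.sum_congr rfl
            intro j hj
            have hj' : j < ς := Finset.mem_range.mp hj
            congr 1
            omega
          rw [hre]
          have : ∑ j ∈ Finset.range ς, γ ^ (j + 1)
              = γ * ∑ j ∈ Finset.range ς, γ ^ j := by
            rw [Finset.mul_sum]
            exact Finset.sum_congr rfl fun j _ => by ring
          rw [this, geom_sum_eq (by linarith) ς]
          rw [div_eq_mul_inv, div_eq_mul_inv]
          have hpow : 0 ≤ γ ^ ς := pow_nonneg hγ0.le _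
          have h1 : (γ ^ ς - 1) / (γ - 1) = (1 - γ ^ ς) / (1 - γ) := by
            rw [div_eq_div_iff (by linarith) (by linarith)]; ring
          rw [div_eq_mul_inv] at h1
          rw [h1]
          rw [div_eq_mul_inv]
          have : (1 - γ ^ ς) * (1 - γ)⁻¹ ≤ 1 * (1 - γ)⁻¹ := by
            apply mul_le_mul_of_nonneg_right (by linarith) (by positivity)
          nlinarith [mul_le_mul_of_nonneg_left this hγ0.le]
      _ = η τ * (γ / (1 - γ)) := mul_comm _ _
  linarith [h1, h2]
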